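/- arXiv:2308.04358 — 3 statements merged into one kernel-verified Lean document; each statement's English description precedes it below -/
import Mathlib

section
/- Let r > 0 and let u be a C² vector field on the closed disk B_r = {x ∈ ℝ² : |x| ≤ r} such that ∂ᵢuⱼ + ∂ⱼuᵢ = 0 on the open disk for all i,j ∈ {1,2}, and such that u is tangential on the boundary circle, i.e. u(x)·x = 0 whenever |x| = r. Then there exists c ∈ ℝ with u(x) = c·(x₂, −x₁) for all x in the disk. -/
/-!
The vanishing of the deformation tensor says that `Du(y)` is skew-symmetric for every `y`.
The third-order tensor `⟪D²u(x) a b, c⟫` is then symmetric in `(a, b)` (Schwarz) and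
antisymmetric in `(b, c)`, and such a tensor vanishes. So `Du` is a constant skew map `A` on the
open disk, and `u = A + b` there and, by continuity, on the closed disk. Since `⟪A x, x⟫ = 0`,
tangency on the boundary circle reads `⟪b, x⟫ = 0` for `‖x‖ = r`, whence `b = 0`; and a skew map
of `ℝ²` is a multiple of the rotation `x ↦ (x₂, -x₁)`.
-/

open scoped BigOperators

noncomputable section

abbrev E2 := EuclideanSpace ℝ (Fin 2)

/-- Partial derivative in the `i`-th coordinate direction of a scalar function on `ℝ²`. -/
noncomputable def pd (i : Fin 2) (f : E2 → ℝ) (x : E2) : ℝ :=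
  fderiv ℝ f x (EuclideanSpace.single i 1)

open Filter Topology InnerProductSpace

lemma eq_zero_of_symm_of_antisymm {α G : Type*} [AddGroup G] [IsAddTorsionFree G]
    (T : α → α → α → G) (hs : ∀ a b c, T a b c = T b a c)
    (ha : ∀ a b c, T a b c = -T a c b) (a b c : α) : T a b c = 0 := by
  refine self_eq_neg.mp ?_
  calc T a b c = -T a c b := ha a b c
    _ = -T c a b := by rw [hs a c b]
    _ = T c b a := by rw [ha c a b, neg_neg]
    _ = T b c a := hs c b a
    _ = -T b a c := ha b c a
    _ = -T a b c := by rw [hs b a c]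

section Killing

variable {E : Type*} [NormedAddCommGroup E] [InnerProductSpace ℝ E] {f : E → E} {x : E}

lemma fderiv_fderiv_eq_zero_of_eventually_skew
    (hf : ∀ᶠ y in 𝓝 x, DifferentiableAt ℝ f y) (hf' : DifferentiableAt ℝ (fderiv ℝ f) x)
    (hskew : ∀ᶠ y in 𝓝 x, ∀ v w, ⟪fderiv ℝ f y v, w⟫_ℝ + ⟪fderiv ℝ f y w, v⟫_ℝ = 0) :
    fderiv ℝ (fderiv ℝ f) x = 0 := by
  set D := fderiv ℝ (fderiv ℝ f) x
  have hsymm : ∀ a b, D a b = D b a :=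
    second_derivative_symmetric_of_eventually (hf.mono fun y hy => hy.hasFDerivAt)
      hf'.hasFDerivAt
  have hanti : ∀ a b c, ⟪D a b, c⟫_ℝ + ⟪D a c, b⟫_ℝ = 0 := by
    intro a b c
    let S : (E →L[ℝ] E) →L[ℝ] ℝ :=
      (innerSL ℝ c).comp (ContinuousLinearMap.apply ℝ E b) +
        (innerSL ℝ b).comp (ContinuousLinearMap.apply ℝ E c)
    have hS : HasFDerivAt (S ∘ fderiv ℝ f) (S.comp D) x :=
      S.hasFDerivAt.comp x hf'.hasFDerivAt
    have hS0 : HasFDerivAt (S ∘ fderiv ℝ f) (0 : E →L[ℝ] ℝ) x :=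
      (hasFDerivAt_const 0 x).congr_of_eventuallyEq <| hskew.mono fun y hy => by
        simpa [S, real_inner_comm] using hy b c
    simpa [S, real_inner_comm] using congr($(hS.unique hS0) a)
  ext a b : 2
  refine inner_self_eq_zero.mp (eq_zero_of_symm_of_antisymm (fun a b c => ⟪D a b, c⟫_ℝ)
    (fun a b c => by rw [hsymm]) (fun a b c => eq_neg_of_add_eq_zero_left (hanti a b c)) a b _)

lemma IsOpen.exists_eqOn_fderiv_add_of_skew {s : Set E} (hs : IsOpen s) (hs' : IsPreconnected s)
    (hf : DifferentiableOn ℝ f s) (hf' : DifferentiableOn ℝ (fderiv ℝ f) s)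
    (hskew : ∀ y ∈ s, ∀ v w, ⟪fderiv ℝ f y v, w⟫_ℝ + ⟪fderiv ℝ f y w, v⟫_ℝ = 0) (hx : x ∈ s) :
    ∃ b, s.EqOn f (fun y => fderiv ℝ f x y + b) := by
  have hconst : s.EqOn (fderiv ℝ f) (fun _ => fderiv ℝ f x) := fun y hy =>
    hs.is_const_of_fderiv_eq_zero hs' hf' (fun z hz =>
      fderiv_fderiv_eq_zero_of_eventually_skew
        (eventually_of_mem (hs.mem_nhds hz) fun w hw => hf.differentiableAt (hs.mem_nhds hw))
        (hf'.differentiableAt (hs.mem_nhds hz))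
        (eventually_of_mem (hs.mem_nhds hz) hskew)) hy hx
  exact hs.exists_eq_add_of_fderiv_eq hs' hf (fderiv ℝ f x).differentiable.differentiableOn
    fun y hy => by rw [hconst hy, ContinuousLinearMap.fderiv]

end Killing

lemma eq_zero_of_forall_norm_eq_inner_eq_zero {E : Type*} [NormedAddCommGroup E]
    [InnerProductSpace ℝ E] {r : ℝ} (hr : 0 < r) {b : E} (h : ∀ x : E, ‖x‖ = r → ⟪b, x⟫_ℝ = 0) :
    b = 0 := by
  by_contra hb
  have hb' : 0 < ‖b‖ := norm_pos_iff.mpr hb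
  have := h ((r / ‖b‖) • b) (by rw [norm_smul, Real.norm_of_nonneg (by positivity)]; field_simp)
  rw [real_inner_smul_right, real_inner_self_eq_norm_sq] at this
  have : 0 < r / ‖b‖ * ‖b‖ ^ 2 := by positivity
  linarith

lemma EuclideanSpace.inner_clm_apply_eq_sum {ι : Type*} [Fintype ι] [DecidableEq ι]
    (L : EuclideanSpace ℝ ι →L[ℝ] EuclideanSpace ℝ ι) (v w : EuclideanSpace ℝ ι) :
    ⟪L v, w⟫_ℝ = ∑ i, ∑ j, v i * w j * L (EuclideanSpace.single i 1) j := by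
  conv_lhs => rw [← (EuclideanSpace.basisFun ι ℝ).sum_repr v]
  simp only [map_sum, map_smul, sum_inner, PiLp.inner_apply, EuclideanSpace.basisFun_apply,
    EuclideanSpace.basisFun_repr]
  refine Finset.sum_congr rfl fun i _ => Finset.sum_congr rfl fun j _ => ?_
  simp only [RCLike.inner_apply, conj_trivial, PiLp.smul_apply, smul_eq_mul]
  ring

lemma EuclideanSpace.inner_add_inner_eq_zero_of_apply_single {ι : Type*} [Fintype ι]
    [DecidableEq ι] {L : EuclideanSpace ℝ ι →L[ℝ] EuclideanSpace ℝ ι}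
    (hL : ∀ i j, L (EuclideanSpace.single i 1) j + L (EuclideanSpace.single j 1) i = 0)
    (v w : EuclideanSpace ℝ ι) : ⟪L v, w⟫_ℝ + ⟪L w, v⟫_ℝ = 0 := by
  rw [inner_clm_apply_eq_sum, inner_clm_apply_eq_sum,
    Finset.sum_comm (f := fun i j => w i * v j * _), ← Finset.sum_add_distrib]
  refine Finset.sum_eq_zero fun i _ => ?_
  rw [← Finset.sum_add_distrib]
  refine Finset.sum_eq_zero fun j _ => ?_
  linear_combination v i * w j * hL i j

lemma pd_eq_fderiv_apply {u : E2 → E2} {x : E2} (hu : DifferentiableAt ℝ u x) (i j : Fin 2) :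
    pd i (fun y => u y j) x = fderiv ℝ u x (EuclideanSpace.single i 1) j :=
  congr($(((EuclideanSpace.proj j).hasFDerivAt.comp x hu.hasFDerivAt).fderiv) _)

lemma apply_eq_rotation_of_skew {A : E2 →L[ℝ] E2}
    (hA : ∀ v w, ⟪A v, w⟫_ℝ + ⟪A w, v⟫_ℝ = 0) (x : E2) :
    A x 0 = A (EuclideanSpace.single 1 1) 0 * x 1 ∧
      A x 1 = -(A (EuclideanSpace.single 1 1) 0 * x 0) := by
  have h := fun i j => hA (EuclideanSpace.single i 1) (EuclideanSpace.single j 1)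
  have h00 := h 0 0
  have h11 := h 1 1
  have h01 := h 0 1
  simp only [EuclideanSpace.inner_single_right, one_mul, conj_trivial] at h00 h11 h01
  have hx : x = x 0 • EuclideanSpace.single 0 1 + x 1 • EuclideanSpace.single 1 1 := by
    ext i; fin_cases i <;> simp
  have hAx : A x = x 0 • A (EuclideanSpace.single 0 1) + x 1 • A (EuclideanSpace.single 1 1) := by
    rw [← map_smul, ← map_smul, ← map_add, ← hx]
  rw [hAx]
  simp only [PiLp.add_apply, PiLp.smul_apply, smul_eq_mul]
  constructor
  · linear_combination (x 0 / 2) * h00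
  · linear_combination x 0 * h01 + (x 1 / 2) * h11

/-- A `C²` vector field on the closed disk of radius `r` whose deformation
tensor vanishes on the open disk and which is tangential on the boundary circle is a rigid
rotation `u x = c • (x₂, -x₁)`. -/
theorem deformation_free_tangential_disk
    (r : ℝ) (hr : 0 < r) (u : E2 → E2)
    (hu : ContDiffOn ℝ 2 u {x : E2 | ‖x‖ ≤ r})
    (hdef : ∀ x : E2, ‖x‖ < r → ∀ i j : Fin 2,
      pd i (fun y => u y j) x + pd j (fun y => u y i) x = 0)
    (htan : ∀ x : E2, ‖x‖ = r → (∑ i : Fin 2, u x i * x i) = 0) :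
    ∃ c : ℝ, ∀ x : E2, ‖x‖ ≤ r →
      u x 0 = c * x 1 ∧ u x 1 = -(c * x 0) := by
  have hdisk : {x : E2 | ‖x‖ ≤ r} = Metric.closedBall 0 r := by ext; simp
  rw [hdisk] at hu
  have huB : ContDiffOn ℝ 2 u (Metric.ball 0 r) := hu.mono Metric.ball_subset_closedBall
  have hdiff : DifferentiableOn ℝ u (Metric.ball 0 r) := huB.differentiableOn (by norm_num)
  have hdiff' : DifferentiableOn ℝ (fderiv ℝ u) (Metric.ball 0 r) :=
    (huB.fderiv_of_isOpen Metric.isOpen_ball (m := 1) (by norm_num)).differentiableOn one_ne_zero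
  have hskew : ∀ y ∈ Metric.ball (0 : E2) r, ∀ v w,
      ⟪fderiv ℝ u y v, w⟫_ℝ + ⟪fderiv ℝ u y w, v⟫_ℝ = 0 := fun y hy =>
    EuclideanSpace.inner_add_inner_eq_zero_of_apply_single fun i j => by
      have hy' := hdiff.differentiableAt (Metric.isOpen_ball.mem_nhds hy)
      simpa only [pd_eq_fderiv_apply hy'] using hdef y (mem_ball_zero_iff.mp hy) i j
  obtain ⟨b, hb⟩ := Metric.isOpen_ball.exists_eqOn_fderiv_add_of_skew
    (convex_ball 0 r).isPreconnected hdiff hdiff' hskew (Metric.mem_ball_self hr)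
  set A := fderiv ℝ u 0
  have hclosed : (Metric.closedBall 0 r).EqOn u (fun y => A y + b) :=
    hb.of_subset_closure hu.continuousOn (by fun_prop) Metric.ball_subset_closedBall
      (closure_ball 0 hr.ne').ge
  have hb0 : b = 0 := eq_zero_of_forall_norm_eq_inner_eq_zero hr fun x hx => by
    have hux : ⟪u x, x⟫_ℝ = 0 := by simpa [PiLp.inner_apply, mul_comm] using htan x hx
    have hAx : ⟪A x, x⟫_ℝ = 0 := by linarith [hskew 0 (Metric.mem_ball_self hr) x x]
    rwa [hclosed (mem_closedBall_zero_iff.mpr hx.le), inner_add_left, hAx, zero_add] at hux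
  refine ⟨A (EuclideanSpace.single 1 1) 0, fun x hx => ?_⟩
  have hux : u x = A x := by simpa [hb0] using hclosed (mem_closedBall_zero_iff.mpr hx)
  rw [hux]
  exact apply_eq_rotation_of_skew (hskew 0 (Metric.mem_ball_self hr)) x

end
end

section
/- Let b > 0 and let g : (0,b) → ℝ³ be a C² curve with |g(r)| = 1 for all r, satisfying g''(r) + (1/r)·g'(r) + |g'(r)|²·g(r) = 0 on (0,b). If |g'| is bounded on some interval (0,ε) with 0 < ε ≤ b, then g' ≡ 0 on (0,b), i.e. g is constant. -/
/-! Since `‖g‖ = 1` forces `g' ⊥ g`, the normal term `|g'|² g` of the equation drops out of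
`(‖g'‖²)' = 2⟪g', g''⟫ = -(2/r) ‖g'‖²`, so the energy `r² ‖g'‖²` is constant. If `g'` is bounded
near `0`, that constant is at most `t² M²` for every small `t > 0`, hence zero. -/

open scoped BigOperators

noncomputable section

abbrev E3 := EuclideanSpace ℝ (Fin 3)

open scoped RealInnerProductSpace
open Set Filter Topology

section RadialEnergy

variable {F : Type*} [NormedAddCommGroup F] [InnerProductSpace ℝ F]

theorem inner_eq_zero_of_hasDerivAt_of_norm_eventually_eq {g : ℝ → F} {g' : F} {x c : ℝ}
    (hg : HasDerivAt g g' x) (hc : ∀ᶠ t in 𝓝 x, ‖g t‖ = c) : ⟪g x, g'⟫ = 0 := by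
  have hconst : HasDerivAt (‖g ·‖ ^ 2) 0 x :=
    (hasDerivAt_const x (c ^ 2)).congr_of_eventuallyEq (hc.mono fun t ht => by simp [ht])
  linarith [hg.norm_sq.unique hconst]

theorem hasDerivAt_sq_mul_norm_sq_eq_zero {g' : ℝ → F} {g'' v : F} {x lam : ℝ}
    (hg' : HasDerivAt g' g'' x) (hode : g'' + (1 / x) • g' x + lam • v = 0)
    (horth : ⟪v, g' x⟫ = 0) :
    HasDerivAt (fun r => r ^ 2 * ‖g' r‖ ^ 2) 0 x := by
  have hg'' : g'' = -(1 / x) • g' x - lam • v := by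
    rw [← sub_eq_zero, ← hode]; module
  have hinner : ⟪g' x, g''⟫ = -(1 / x) * ‖g' x‖ ^ 2 := by
    rw [hg'', inner_sub_right, real_inner_smul_right, real_inner_smul_right,
      real_inner_comm v, horth, real_inner_self_eq_norm_sq]
    ring
  refine ((hasDerivAt_pow 2 x).fun_mul hg'.norm_sq).congr_deriv ?_
  rw [hinner]
  -- `x ^ 2 * (1 / x) = x` holds also at `x = 0`, where `1 / 0 = 0`.
  field_simp
  ring

theorem exists_sq_mul_norm_deriv_sq_eq_const {s : Set ℝ} (hs : IsOpen s) (hs' : IsPreconnected s)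
    {g : ℝ → F} (hg : ContDiffOn ℝ 2 g s) {c : ℝ}
    (hnorm : ∀ r ∈ s, ‖g r‖ = c) {lam : ℝ → ℝ}
    (hode : ∀ r ∈ s, deriv (deriv g) r + (1 / r) • deriv g r + lam r • g r = 0) :
    ∃ C, ∀ r ∈ s, r ^ 2 * ‖deriv g r‖ ^ 2 = C := by
  have hg1 : ∀ x ∈ s, HasDerivAt g (deriv g x) x := fun x hx =>
    ((hg.differentiableOn (by norm_num)).differentiableAt (hs.mem_nhds hx)).hasDerivAt
  have hg' : ContDiffOn ℝ 1 (deriv g) s := hg.deriv_of_isOpen hs (by norm_num)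
  have hg2 : ∀ x ∈ s, HasDerivAt (deriv g) (deriv (deriv g) x) x := fun x hx =>
    ((hg'.differentiableOn (by norm_num)).differentiableAt (hs.mem_nhds hx)).hasDerivAt
  have henergy : ∀ x ∈ s, HasDerivAt (fun r => r ^ 2 * ‖deriv g r‖ ^ 2) 0 x := fun x hx =>
    hasDerivAt_sq_mul_norm_sq_eq_zero (hg2 x hx) (hode x hx)
      (inner_eq_zero_of_hasDerivAt_of_norm_eventually_eq (hg1 x hx)
        (eventually_of_mem (hs.mem_nhds hx) hnorm))
  exact hs.exists_is_const_of_deriv_eq_zero hs'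
    (fun x hx => (henergy x hx).differentiableAt.differentiableWithinAt)
    (fun x hx => (henergy x hx).deriv)

end RadialEnergy

theorem nonpos_of_forall_le_sq_mul {c K ε : ℝ} (hε : 0 < ε)
    (h : ∀ t ∈ Ioo 0 ε, c ≤ t ^ 2 * K) : c ≤ 0 := by
  have hlim : Tendsto (fun t : ℝ => t ^ 2 * K) (𝓝[>] 0) (𝓝 0) :=
    (Continuous.tendsto' (by fun_prop) 0 0 (by simp)).mono_left nhdsWithin_le_nhds
  exact ge_of_tendsto hlim (eventually_of_mem (Ioo_mem_nhdsGT hε) h)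

theorem radial_harmonic_map_constant_general
    (b : ℝ) (g : ℝ → E3)
    (hg : ContDiffOn ℝ 2 g (Set.Ioo 0 b))
    (hunit : ∀ r ∈ Set.Ioo (0 : ℝ) b, ‖g r‖ = 1)
    (hode : ∀ r ∈ Set.Ioo (0 : ℝ) b,
      deriv (deriv g) r + (1 / r) • deriv g r + (‖deriv g r‖ ^ 2) • g r = 0)
    (ε : ℝ) (hε : 0 < ε) (hεb : ε ≤ b)
    (M : ℝ) (hM : ∀ r ∈ Set.Ioo (0 : ℝ) ε, ‖deriv g r‖ ≤ M) :
    (∀ r ∈ Set.Ioo (0 : ℝ) b, deriv g r = 0) ∧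
    ∃ v : E3, ∀ r ∈ Set.Ioo (0 : ℝ) b, g r = v := by
  obtain ⟨C, hC⟩ := exists_sq_mul_norm_deriv_sq_eq_const isOpen_Ioo isPreconnected_Ioo
    hg hunit hode
  have hCle : C ≤ 0 := nonpos_of_forall_le_sq_mul (K := M ^ 2) hε fun t ht => by
    rw [← hC t ⟨ht.1, ht.2.trans_le hεb⟩]
    gcongr
    exact hM t ht
  have hderiv : ∀ r ∈ Ioo 0 b, deriv g r = 0 := fun r hr => by
    have : ‖deriv g r‖ ^ 2 ≤ 0 :=
      nonpos_of_mul_nonpos_right ((hC r hr).trans_le hCle) (pow_pos hr.1 2)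
    simpa using this
  exact ⟨hderiv, isOpen_Ioo.exists_is_const_of_deriv_eq_zero isPreconnected_Ioo
    (hg.differentiableOn (by norm_num)) hderiv⟩

/-- A `C²` unit-vector solution `g : (0,b) → ℝ³` of the radial harmonic
map equation `g'' + g'/r + |g'|² g = 0` whose derivative is bounded near `r = 0` is
constant: `g' ≡ 0` on `(0,b)`. -/
theorem radial_harmonic_map_constant
    (b : ℝ) (hb : 0 < b) (g : ℝ → E3)
    (hg : ContDiffOn ℝ 2 g (Set.Ioo 0 b))
    (hunit : ∀ r ∈ Set.Ioo (0 : ℝ) b, ‖g r‖ = 1)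
    (hode : ∀ r ∈ Set.Ioo (0 : ℝ) b,
      deriv (deriv g) r + (1 / r) • deriv g r + (‖deriv g r‖ ^ 2) • g r = 0)
    (ε : ℝ) (hε : 0 < ε) (hεb : ε ≤ b)
    (M : ℝ) (hM : ∀ r ∈ Set.Ioo (0 : ℝ) ε, ‖deriv g r‖ ≤ M) :
    (∀ r ∈ Set.Ioo (0 : ℝ) b, deriv g r = 0) ∧
    ∃ v : E3, ∀ r ∈ Set.Ioo (0 : ℝ) b, g r = v :=
  radial_harmonic_map_constant_general b g hg hunit hode ε hε hεb M hM

end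
end

section
/- Let u : ℝ × ℝ² → ℝ², P : ℝ × ℝ² → ℝ and d : ℝ × ℝ² → ℝ³ be C³ functions satisfying, at every point (t,x₁,x₂) with x₂ > 0, the momentum equation ∂ₜu + (u·∇)u − Δu + ∇P = −∇·(∇d ⊙ ∇d − ½|∇d|²·Id₂) and the incompressibility ∇·u = 0. Define, for x₂ < 0, ũ(t,x₁,x₂) = (u₁(t,x₁,−x₂), −u₂(t,x₁,−x₂)), P̃(t,x₁,x₂) = P(t,x₁,−x₂), and d̃(t,x₁,x₂) = (d₁(t,x₁,−x₂), d₂(t,x₁,−x₂), −d₃(t,x₁,−x₂)). Then at every point with x₂ < 0: ∂ₜũ + (ũ·∇)ũ − Δũ + ∇P̃ = −∇·(∇d̃ ⊙ ∇d̃ − ½|∇d̃|²·Id₂) and ∇·ũ = 0. -/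
open scoped BigOperators

noncomputable section

/-- Time derivative `∂ₜf` of a scalar function of `(t, x) ∈ ℝ × ℝ²`. -/
noncomputable def dt (f : ℝ × E2 → ℝ) (p : ℝ × E2) : ℝ :=
  fderiv ℝ f p ((1 : ℝ), (0 : E2))

/-- Spatial partial derivative `∂ᵢf` of a scalar function of `(t, x) ∈ ℝ × ℝ²`. -/
noncomputable def ds (i : Fin 2) (f : ℝ × E2 → ℝ) (p : ℝ × E2) : ℝ :=
  fderiv ℝ f p ((0 : ℝ), EuclideanSpace.single i 1)

/-- Spatial Laplacian `Δf = ∂₁₁f + ∂₂₂f`. -/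
noncomputable def lap (f : ℝ × E2 → ℝ) (p : ℝ × E2) : ℝ :=
  ds 0 (fun q => ds 0 f q) p + ds 1 (fun q => ds 1 f q) p

/-- `|∇d|² = Σᵢⱼ (∂ᵢdⱼ)²` (spatial gradient). -/
noncomputable def gradSq (d : ℝ × E2 → E3) (p : ℝ × E2) : ℝ :=
  ∑ i : Fin 2, ∑ k : Fin 3, (ds i (fun q => d q k) p) ^ 2

/-- The momentum equation
`∂ₜu + (u·∇)u − Δu + ∇P = −∇·(∇d ⊙ ∇d − ½|∇d|² Id₂)` at a point, componentwise. -/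
def momentumEq (u : ℝ × E2 → E2) (P : ℝ × E2 → ℝ) (d : ℝ × E2 → E3)
    (p : ℝ × E2) : Prop :=
  ∀ j : Fin 2,
    dt (fun q => u q j) p + (∑ i : Fin 2, u p i * ds i (fun q => u q j) p)
        - lap (fun q => u q j) p + ds j P p
      = - ∑ i : Fin 2, ds i (fun q =>
          (∑ k : Fin 3, ds i (fun q' => d q' k) q * ds j (fun q' => d q' k) q)
            - (if i = j then (1 : ℝ) / 2 else 0) * gradSq d q) p

/-- Incompressibility `∇·u = 0` at a point. -/
def divFree (u : ℝ × E2 → E2) (p : ℝ × E2) : Prop :=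
  ds 0 (fun q => u q 0) p + ds 1 (fun q => u q 1) p = 0

/-- Reflection `(t, x₁, x₂) ↦ (t, x₁, -x₂)` of a space-time point. -/
noncomputable def reflPt (p : ℝ × E2) : ℝ × E2 :=
  (p.1, EuclideanSpace.single 0 (p.2 0) + EuclideanSpace.single 1 (-(p.2 1)))

/-- Reflected velocity field: `ũ(t,x₁,x₂) = (u₁(t,x₁,-x₂), -u₂(t,x₁,-x₂))`. -/
noncomputable def reflU (u : ℝ × E2 → E2) (p : ℝ × E2) : E2 :=
  EuclideanSpace.single 0 (u (reflPt p) 0) + EuclideanSpace.single 1 (-(u (reflPt p) 1))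

/-- Reflected director field:
`d̃(t,x₁,x₂) = (d₁(t,x₁,-x₂), d₂(t,x₁,-x₂), -d₃(t,x₁,-x₂))`. -/
noncomputable def reflD (d : ℝ × E2 → E3) (p : ℝ × E2) : E3 :=
  EuclideanSpace.single 0 (d (reflPt p) 0) + EuclideanSpace.single 1 (d (reflPt p) 1)
    + EuclideanSpace.single 2 (-(d (reflPt p) 2))

/-- Reflected pressure: `P̃(t,x₁,x₂) = P(t,x₁,-x₂)`. -/
noncomputable def reflP (P : ℝ × E2 → ℝ) (p : ℝ × E2) : ℝ := P (reflPt p)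

/-! ### Auxiliary material for the reflection argument -/

def sg : Fin 2 → ℝ := fun i => if i = 1 then -1 else 1
def sg3 : Fin 3 → ℝ := fun k => if k = 2 then -1 else 1

lemma sg_sq (i : Fin 2) : sg i * sg i = 1 := by fin_cases i <;> norm_num [sg, Fin.ext_iff]
lemma sg3_sq (k : Fin 3) : sg3 k * sg3 k = 1 := by fin_cases k <;> norm_num [sg3, Fin.ext_iff]

def M : E2 →L[ℝ] E2 := LinearMap.toContinuousLinearMap
  { toFun := fun x => WithLp.toLp 2 (fun i => sg i * x i)
    map_add' := by intro x y; ext i; simp [mul_add]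
    map_smul' := by intro c x; ext i; simp [smul_eq_mul]; ring }

def L : (ℝ × E2) →L[ℝ] (ℝ × E2) := (ContinuousLinearMap.id ℝ ℝ).prodMap M

@[simp] lemma L_fst (p : ℝ × E2) : (L p).1 = p.1 := rfl
@[simp] lemma L_snd (p : ℝ × E2) (i : Fin 2) : (L p).2 i = sg i * p.2 i := rfl

lemma reflPt_eq (p : ℝ × E2) : reflPt p = L p := by
  rw [reflPt]
  refine Prod.ext rfl ?_
  ext i
  fin_cases i <;>
    simp [EuclideanSpace.single_apply, PiLp.add_apply, sg, Fin.ext_iff]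

lemma diffAt_compL {f : ℝ × E2 → ℝ} {p : ℝ × E2} (hf : DifferentiableAt ℝ f (L p)) :
    DifferentiableAt ℝ (fun q => f (L q)) p :=
  hf.comp p L.differentiableAt

lemma fderiv_compL {f : ℝ × E2 → ℝ} {p : ℝ × E2} (hf : DifferentiableAt ℝ f (L p))
    (v : ℝ × E2) : fderiv ℝ (fun q => f (L q)) p v = fderiv ℝ f (L p) (L v) := by
  have h : fderiv ℝ (f ∘ L) p = (fderiv ℝ f (L p)).comp (fderiv ℝ (L : ℝ × E2 → ℝ × E2) p) :=
    fderiv_comp p hf L.differentiableAt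
  rw [L.fderiv] at h
  have : (fun q => f (L q)) = f ∘ L := rfl
  rw [this, h]
  rfl

lemma dt_compL {f : ℝ × E2 → ℝ} {p : ℝ × E2} (hf : DifferentiableAt ℝ f (L p)) :
    dt (fun q => f (L q)) p = dt f (L p) := by
  have hv : L ((1 : ℝ), (0 : E2)) = ((1 : ℝ), (0 : E2)) := by
    refine Prod.ext rfl ?_
    ext i; simp
  rw [dt, fderiv_compL hf, hv, dt]

lemma L_single (i : Fin 2) :
    L ((0 : ℝ), EuclideanSpace.single i 1) = sg i • ((0 : ℝ), EuclideanSpace.single i 1) := by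
  refine Prod.ext (by simp) ?_
  ext j
  simp only [L_snd, Prod.smul_snd, PiLp.smul_apply, smul_eq_mul, EuclideanSpace.single_apply]
  by_cases h : j = i <;> simp [h]

lemma ds_compL {f : ℝ × E2 → ℝ} {p : ℝ × E2} (hf : DifferentiableAt ℝ f (L p)) (i : Fin 2) :
    ds i (fun q => f (L q)) p = sg i * ds i f (L p) := by
  rw [ds, fderiv_compL hf, L_single, map_smul, smul_eq_mul, ds]

lemma ds_const_mul {f : ℝ × E2 → ℝ} {p : ℝ × E2} (hf : DifferentiableAt ℝ f p)
    (c : ℝ) (i : Fin 2) : ds i (fun q => c * f q) p = c * ds i f p := by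
  rw [ds, fderiv_const_mul hf c]; rfl

lemma dt_const_mul {f : ℝ × E2 → ℝ} {p : ℝ × E2} (hf : DifferentiableAt ℝ f p)
    (c : ℝ) : dt (fun q => c * f q) p = c * dt f p := by
  rw [dt, fderiv_const_mul hf c]; rfl

lemma contDiff_ds {n : ℕ∞} {f : ℝ × E2 → ℝ} (hf : ContDiff ℝ (n + 1) f) (i : Fin 2) :
    ContDiff ℝ n (ds i f) := by
  have h := (hf.fderiv_right (m := n) le_rfl).clm_apply
    (contDiff_const (c := ((0 : ℝ), EuclideanSpace.single i 1)))
  exact h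

lemma ds_ds_compL {f : ℝ × E2 → ℝ} (hf : ContDiff ℝ 2 f) (i : Fin 2) (p : ℝ × E2) :
    ds i (fun q => ds i (fun q' => f (L q')) q) p = ds i (fun q => ds i f q) (L p) := by
  have hds : ContDiff ℝ 1 (ds i f) := by
    have : ContDiff ℝ ((1 : ℕ∞) + 1) f := by exact_mod_cast hf
    exact contDiff_ds this i
  have h1 : (fun q => ds i (fun q' => f (L q')) q) = fun q => sg i * ds i f (L q) := by
    funext q
    exact ds_compL (hf.differentiable (by norm_num) (L q)) i
  rw [h1]
  have hdg : DifferentiableAt ℝ (fun q => ds i f (L q)) p :=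
    diffAt_compL (hds.differentiable (by norm_num) (L p))
  rw [ds_const_mul hdg, ds_compL (hds.differentiable (by norm_num) (L p))]
  rw [← mul_assoc, sg_sq i, one_mul]

lemma lap_compL {f : ℝ × E2 → ℝ} (hf : ContDiff ℝ 2 f) (p : ℝ × E2) :
    lap (fun q => f (L q)) p = lap f (L p) := by
  rw [lap, lap, ds_ds_compL hf 0, ds_ds_compL hf 1]

lemma lap_const_mul {f : ℝ × E2 → ℝ} (hf : ContDiff ℝ 2 f) (c : ℝ) (p : ℝ × E2) :
    lap (fun q => c * f q) p = c * lap f p := by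
  have hds : ∀ i : Fin 2, ContDiff ℝ 1 (ds i f) := by
    intro i
    have : ContDiff ℝ ((1 : ℕ∞) + 1) f := by exact_mod_cast hf
    exact contDiff_ds this i
  have h1 : ∀ i : Fin 2, (fun q => ds i (fun q' => c * f q') q) = fun q => c * ds i f q := by
    intro i; funext q
    exact ds_const_mul (hf.differentiable (by norm_num) q) c i
  rw [lap, lap, h1 0, h1 1,
    ds_const_mul ((hds 0).differentiable (by norm_num) p) c,
    ds_const_mul ((hds 1).differentiable (by norm_num) p) c]
  ring

lemma ds_scaled_compL {f g : ℝ × E2 → ℝ} {c : ℝ} (hf : Differentiable ℝ f)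
    (hg : g = fun q => c * f (L q)) (i : Fin 2) (p : ℝ × E2) :
    ds i g p = c * (sg i * ds i f (L p)) := by
  subst hg
  rw [ds_const_mul (diffAt_compL (hf (L p))) c, ds_compL (hf (L p))]

lemma dt_scaled_compL {f g : ℝ × E2 → ℝ} {c : ℝ} (hf : Differentiable ℝ f)
    (hg : g = fun q => c * f (L q)) (p : ℝ × E2) :
    dt g p = c * dt f (L p) := by
  subst hg
  rw [dt_const_mul (diffAt_compL (hf (L p))) c, dt_compL (hf (L p))]

lemma lap_scaled_compL {f g : ℝ × E2 → ℝ} {c : ℝ} (hf : ContDiff ℝ 2 f)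
    (hg : g = fun q => c * f (L q)) (p : ℝ × E2) :
    lap g p = c * lap f (L p) := by
  subst hg
  have hc : ContDiff ℝ 2 (fun q => f (L q)) := hf.comp L.contDiff
  rw [lap_const_mul hc c p, lap_compL hf p]

lemma reflU_apply (u : ℝ × E2 → E2) (q : ℝ × E2) (j : Fin 2) :
    reflU u q j = sg j * u (L q) j := by
  rw [reflU, reflPt_eq]
  fin_cases j <;>
    simp [EuclideanSpace.single_apply, PiLp.add_apply, sg, Fin.ext_iff]

lemma reflD_apply (d : ℝ × E2 → E3) (q : ℝ × E2) (k : Fin 3) :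
    reflD d q k = sg3 k * d (L q) k := by
  rw [reflD, reflPt_eq]
  fin_cases k <;>
    simp [EuclideanSpace.single_apply, PiLp.add_apply, sg3, Fin.ext_iff]

lemma aux_sq (s t a : ℝ) (hs : s * s = 1) (ht : t * t = 1) : (s * (t * a)) ^ 2 = a ^ 2 := by
  linear_combination (t * t * a ^ 2) * hs + a ^ 2 * ht

lemma aux_mul (s x y a b : ℝ) (hs : s * s = 1) :
    (s * (x * a)) * (s * (y * b)) = (x * y) * (a * b) := by
  linear_combination (x * y * a * b) * hs

/-- If `(u, P, d)` are `C³` and satisfy the momentum equation and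
incompressibility on the upper half-plane `{x₂ > 0}`, then the reflected fields
`(ũ, P̃, d̃)` satisfy the momentum equation and incompressibility on the lower
half-plane `{x₂ < 0}`. -/
theorem momentum_equation_reflection
    (u : ℝ × E2 → E2) (P : ℝ × E2 → ℝ) (d : ℝ × E2 → E3)
    (hu : ContDiff ℝ 3 u) (hP : ContDiff ℝ 3 P) (hd : ContDiff ℝ 3 d)
    (heq : ∀ p : ℝ × E2, 0 < p.2 1 → momentumEq u P d p ∧ divFree u p) :
    ∀ p : ℝ × E2, p.2 1 < 0 →
      momentumEq (reflU u) (reflP P) (reflD d) p ∧ divFree (reflU u) p := by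
  intro p hp
  have hp' : 0 < (L p).2 1 := by
    have : (L p).2 1 = -(p.2 1) := by simp [sg]
    rw [this]; linarith
  obtain ⟨hm, hdv⟩ := heq (L p) hp'
  -- component regularity
  have hU : ∀ j : Fin 2, ContDiff ℝ 3 (fun q => u q j) := fun j => contDiff_euclidean.mp hu j
  have hD : ∀ k : Fin 3, ContDiff ℝ 3 (fun q => d q k) := fun k => contDiff_euclidean.mp hd k
  have hUc : ∀ j : Fin 2, (fun q => reflU u q j) = fun q => sg j * u (L q) j :=
    fun j => funext fun q => reflU_apply u q j
  have hDc : ∀ k : Fin 3, (fun q => reflD d q k) = fun q => sg3 k * d (L q) k :=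
    fun k => funext fun q => reflD_apply d q k
  have hdsd : ∀ (i : Fin 2) (k : Fin 3), ContDiff ℝ 2 (ds i (fun q => d q k)) := by
    intro i k
    have : ContDiff ℝ ((2 : ℕ∞) + 1) (fun q => d q k) := by exact_mod_cast hD k
    exact contDiff_ds this i
  have hgs2 : ContDiff ℝ 2 (gradSq d) := by
    have hgse : gradSq d =
        fun p => ∑ i : Fin 2, ∑ k : Fin 3, (ds i (fun q => d q k) p) ^ 2 := rfl
    rw [hgse]
    exact ContDiff.sum fun i _ => ContDiff.sum fun k _ => (hdsd i k).pow 2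
  -- pointwise reflection of first derivatives of the director
  have hdrefl : ∀ (i : Fin 2) (k : Fin 3) (q : ℝ × E2),
      ds i (fun q' => reflD d q' k) q = sg3 k * (sg i * ds i (fun q' => d q' k) (L q)) :=
    fun i k q => ds_scaled_compL ((hD k).differentiable (by norm_num)) (hDc k) i q
  have hgsrefl : ∀ q : ℝ × E2, gradSq (reflD d) q = gradSq d (L q) := by
    intro q
    rw [gradSq, gradSq]
    refine Finset.sum_congr rfl fun i _ => Finset.sum_congr rfl fun k _ => ?_
    rw [hdrefl i k q]
    exact aux_sq _ _ _ (sg3_sq k) (sg_sq i)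
  constructor
  · -- momentum equation
    intro j
    have h1 : dt (fun q => reflU u q j) p = sg j * dt (fun q => u q j) (L p) :=
      dt_scaled_compL ((hU j).differentiable (by norm_num)) (hUc j) p
    have hds2 : ∀ i : Fin 2, ds i (fun q => reflU u q j) p
        = sg j * (sg i * ds i (fun q => u q j) (L p)) :=
      fun i => ds_scaled_compL ((hU j).differentiable (by norm_num)) (hUc j) i p
    have h2 : (∑ i : Fin 2, reflU u p i * ds i (fun q => reflU u q j) p)
        = sg j * ∑ i : Fin 2, u (L p) i * ds i (fun q => u q j) (L p) := by
      rw [Finset.mul_sum]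
      refine Finset.sum_congr rfl fun i _ => ?_
      rw [reflU_apply u p i, hds2 i]
      linear_combination (sg j * u (L p) i * ds i (fun q => u q j) (L p)) * sg_sq i
    have h3 : lap (fun q => reflU u q j) p = sg j * lap (fun q => u q j) (L p) :=
      lap_scaled_compL ((hU j).of_le (by norm_num)) (hUc j) p
    have hPc : reflP P = fun q => (1 : ℝ) * P (L q) := by
      funext q; rw [reflP, reflPt_eq, one_mul]
    have h4 : ds j (reflP P) p = 1 * (sg j * ds j P (L p)) :=
      ds_scaled_compL (hP.differentiable (by norm_num)) hPc j p
    -- the stress term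
    have hstress : ∀ i : Fin 2,
        ds i (fun q =>
          (∑ k : Fin 3, ds i (fun q' => reflD d q' k) q * ds j (fun q' => reflD d q' k) q)
            - (if i = j then (1 : ℝ) / 2 else 0) * gradSq (reflD d) q) p
        = sg j * ds i (fun q =>
          (∑ k : Fin 3, ds i (fun q' => d q' k) q * ds j (fun q' => d q' k) q)
            - (if i = j then (1 : ℝ) / 2 else 0) * gradSq d q) (L p) := by
      intro i
      have hbody : ContDiff ℝ 1 (fun q =>
          (∑ k : Fin 3, ds i (fun q' => d q' k) q * ds j (fun q' => d q' k) q)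
            - (if i = j then (1 : ℝ) / 2 else 0) * gradSq d q) := by
        refine ContDiff.sub ?_ ?_
        · exact (ContDiff.sum fun k _ => (hdsd i k).mul (hdsd j k)).of_le (by norm_num)
        · exact (contDiff_const.mul hgs2).of_le (by norm_num)
      have hT : (fun q =>
          (∑ k : Fin 3, ds i (fun q' => reflD d q' k) q * ds j (fun q' => reflD d q' k) q)
            - (if i = j then (1 : ℝ) / 2 else 0) * gradSq (reflD d) q)
          = fun q => (sg i * sg j) *
            ((∑ k : Fin 3, ds i (fun q' => d q' k) (L q) * ds j (fun q' => d q' k) (L q))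
              - (if i = j then (1 : ℝ) / 2 else 0) * gradSq d (L q)) := by
        funext q
        have hsum : (∑ k : Fin 3,
            ds i (fun q' => reflD d q' k) q * ds j (fun q' => reflD d q' k) q)
            = (sg i * sg j) *
              ∑ k : Fin 3, ds i (fun q' => d q' k) (L q) * ds j (fun q' => d q' k) (L q) := by
          rw [Finset.mul_sum]
          refine Finset.sum_congr rfl fun k _ => ?_
          rw [hdrefl i k q, hdrefl j k q]
          exact aux_mul _ _ _ _ _ (sg3_sq k)
        have hite : (if i = j then (1 : ℝ) / 2 else 0) * gradSq (reflD d) q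
            = (sg i * sg j) * ((if i = j then (1 : ℝ) / 2 else 0) * gradSq d (L q)) := by
          rw [hgsrefl q]
          by_cases h : i = j
          · subst h
            rw [if_pos rfl]
            linear_combination (-(1 / 2) * gradSq d (L q)) * sg_sq i
          · rw [if_neg h]; ring
        rw [hsum, hite]; ring
      have h := ds_scaled_compL (f := fun q =>
          (∑ k : Fin 3, ds i (fun q' => d q' k) q * ds j (fun q' => d q' k) q)
            - (if i = j then (1 : ℝ) / 2 else 0) * gradSq d q)
        (hbody.differentiable (by norm_num)) hT i p
      rw [h]
      linear_combination (sg j * ds i (fun q =>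
          (∑ k : Fin 3, ds i (fun q' => d q' k) q * ds j (fun q' => d q' k) q)
            - (if i = j then (1 : ℝ) / 2 else 0) * gradSq d q) (L p)) * sg_sq i
    have h5 : (∑ i : Fin 2, ds i (fun q =>
          (∑ k : Fin 3, ds i (fun q' => reflD d q' k) q * ds j (fun q' => reflD d q' k) q)
            - (if i = j then (1 : ℝ) / 2 else 0) * gradSq (reflD d) q) p)
        = ∑ i : Fin 2, sg j * ds i (fun q =>
          (∑ k : Fin 3, ds i (fun q' => d q' k) q * ds j (fun q' => d q' k) q)
            - (if i = j then (1 : ℝ) / 2 else 0) * gradSq d q) (L p) :=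
      Finset.sum_congr rfl fun i _ => hstress i
    have hmj : dt (fun q => u q j) (L p)
        + (∑ i : Fin 2, u (L p) i * ds i (fun q => u q j) (L p))
        - lap (fun q => u q j) (L p) + ds j P (L p)
        = - ∑ i : Fin 2, ds i (fun q =>
            (∑ k : Fin 3, ds i (fun q' => d q' k) q * ds j (fun q' => d q' k) q)
              - (if i = j then (1 : ℝ) / 2 else 0) * gradSq d q) (L p) := hm j
    show dt (fun q => reflU u q j) p
        + (∑ i : Fin 2, reflU u p i * ds i (fun q => reflU u q j) p)
        - lap (fun q => reflU u q j) p + ds j (reflP P) p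
      = - ∑ i : Fin 2, ds i (fun q =>
          (∑ k : Fin 3, ds i (fun q' => reflD d q' k) q * ds j (fun q' => reflD d q' k) q)
            - (if i = j then (1 : ℝ) / 2 else 0) * gradSq (reflD d) q) p
    rw [h1, h2, h3, h4, h5, ← Finset.mul_sum]
    linear_combination sg j * hmj
  · -- incompressibility
    show ds 0 (fun q => reflU u q 0) p + ds 1 (fun q => reflU u q 1) p = 0
    have e0 : ds 0 (fun q => reflU u q 0) p
        = sg 0 * (sg 0 * ds 0 (fun q => u q 0) (L p)) :=
      ds_scaled_compL ((hU 0).differentiable (by norm_num)) (hUc 0) 0 p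
    have e1 : ds 1 (fun q => reflU u q 1) p
        = sg 1 * (sg 1 * ds 1 (fun q => u q 1) (L p)) :=
      ds_scaled_compL ((hU 1).differentiable (by norm_num)) (hUc 1) 1 p
    have hdv' : ds 0 (fun q => u q 0) (L p) + ds 1 (fun q => u q 1) (L p) = 0 := hdv
    rw [e0, e1]
    linear_combination hdv' + (ds 0 (fun q => u q 0) (L p)) * sg_sq 0
      + (ds 1 (fun q => u q 1) (L p)) * sg_sq 1

end
end
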